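/- (Lemma 2.2, exterior part.) Let Π ∈ M_n(ℂ) be a Hermitian unitary matrix (Π* = Π and Π² = 1). Let f : 𝕋 → M_n(ℂ) satisfy Π f(z) Π = −f(z) for every z ∈ 𝕋, and let (g₊, g₋) be a left canonical factorization datum for f. Then Π · (g₊(w̄) g₋(w)) · Π = −g₊(w̄) g₋(w) for every w in the closed unit disk 𝔻̄; that is, the exterior extension of f anticommutes with Π at every point. -/

import Mathlib

/-!
On the unit circle `z̄ = 1/z`, so the anticommutation `P f P = -f` together with `f = g₊ g₋` and
`P² = 1` says that the holomorphic function `g₊(z)⁻¹ P g₊(z)` agrees there with the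
antiholomorphic function `-g₋(z̄) P g₋(z̄)⁻¹`. A holomorphic function and an antiholomorphic one
that agree on the circle agree on the whole disk, by the maximum principle. Reading the resulting
identity `g₊(w̄)⁻¹ P g₊(w̄) = -g₋(w) P g₋(w)⁻¹` backwards gives the anticommutation of
`g₊(w̄) g₋(w)` with `P`.
-/

open Complex Matrix

/-- The closed unit disk in `ℂ`. -/
def closedDisk : Set ℂ := {z : ℂ | ‖z‖ ≤ 1}

/-- The open unit disk in `ℂ`. -/
def openDisk : Set ℂ := {z : ℂ | ‖z‖ < 1}

/-- A left canonical factorization datum for `f : 𝕋 → Mₙ(ℂ)`: a pair `(gp, gm)` of maps on the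
closed unit disk, continuous there, holomorphic on the open disk, taking invertible values, with
`f z = gp z * gm z̄` on the unit circle. -/
structure LeftCanonicalFactorizationDatum (n : ℕ)
    (f gp gm : ℂ → Matrix (Fin n) (Fin n) ℂ) : Prop where
  cont_p : ContinuousOn gp closedDisk
  cont_m : ContinuousOn gm closedDisk
  hol_p : ∀ i j, DifferentiableOn ℂ (fun z => gp z i j) openDisk
  hol_m : ∀ i j, DifferentiableOn ℂ (fun z => gm z i j) openDisk
  unit_p : ∀ z ∈ closedDisk, IsUnit (gp z)
  unit_m : ∀ z ∈ closedDisk, IsUnit (gm z)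
  factor : ∀ z : ℂ, ‖z‖ = 1 → f z = gp z * gm (starRingEnd ℂ z)

open ComplexConjugate Metric Bornology

section Regularity

variable {𝕜 : Type*} [NontriviallyNormedField 𝕜] {E : Type*} [NormedAddCommGroup E]
  [NormedSpace 𝕜 E] {U : Set E}

theorem DiffContOnCl.fun_sum {F : Type*} [NormedAddCommGroup F] [NormedSpace 𝕜 F] {α : Type*}
    {s : Finset α} {f : α → E → F} (h : ∀ i ∈ s, DiffContOnCl 𝕜 (f i) U) :
    DiffContOnCl 𝕜 (fun z => ∑ i ∈ s, f i z) U :=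
  ⟨.fun_sum fun i hi => (h i hi).1, continuousOn_finsetSum _ fun i hi => (h i hi).2⟩

theorem DiffContOnCl.mul {f g : E → 𝕜} (hf : DiffContOnCl 𝕜 f U) (hg : DiffContOnCl 𝕜 g U) :
    DiffContOnCl 𝕜 (fun z => f z * g z) U :=
  hf.smul hg

theorem DiffContOnCl.fun_finsetProd {α : Type*} {s : Finset α} {f : α → E → 𝕜}
    (h : ∀ i ∈ s, DiffContOnCl 𝕜 (f i) U) : DiffContOnCl 𝕜 (fun z => ∏ i ∈ s, f i z) U := by
  classical
  induction s using Finset.induction_on with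
  | empty => simpa using diffContOnCl_const
  | insert a s ha ih =>
    simp only [Finset.prod_insert ha]
    exact (h a (s.mem_insert_self a)).mul (ih fun i hi => h i (Finset.mem_insert_of_mem hi))

variable {ι : Type*} [Fintype ι] {A B : E → Matrix ι ι 𝕜}

theorem diffContOnCl_matrix_mul (hA : ∀ i j, DiffContOnCl 𝕜 (fun z => A z i j) U)
    (hB : ∀ i j, DiffContOnCl 𝕜 (fun z => B z i j) U) (i j : ι) :
    DiffContOnCl 𝕜 (fun z => (A z * B z) i j) U := by
  simp only [Matrix.mul_apply]
  exact .fun_sum fun k _ => (hA i k).mul (hB k j)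

variable [DecidableEq ι]

theorem diffContOnCl_det (hA : ∀ i j, DiffContOnCl 𝕜 (fun z => A z i j) U) :
    DiffContOnCl 𝕜 (fun z => (A z).det) U := by
  simp only [Matrix.det_apply']
  exact .fun_sum fun σ _ => diffContOnCl_const.mul (.fun_finsetProd fun i _ => hA (σ i) i)

theorem diffContOnCl_adjugate (hA : ∀ i j, DiffContOnCl 𝕜 (fun z => A z i j) U) (i j : ι) :
    DiffContOnCl 𝕜 (fun z => (A z).adjugate i j) U := by
  simp only [Matrix.adjugate_apply]
  refine diffContOnCl_det fun k l => ?_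
  simp only [Matrix.updateRow_apply]
  split_ifs
  exacts [diffContOnCl_const, hA k l]

theorem diffContOnCl_matrix_inv (hA : ∀ i j, DiffContOnCl 𝕜 (fun z => A z i j) U)
    (hunit : ∀ z ∈ closure U, IsUnit (A z)) (i j : ι) :
    DiffContOnCl 𝕜 (fun z => (A z)⁻¹ i j) U := by
  simp only [Matrix.inv_def, Ring.inverse_eq_inv', Matrix.smul_apply, smul_eq_mul]
  exact ((diffContOnCl_det hA).inv fun z hz => ((A z).isUnit_iff_isUnit_det.mp
    (hunit z hz)).ne_zero).mul (diffContOnCl_adjugate hA i j)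

end Regularity

section Reflection

variable {E : Type*} [NormedAddCommGroup E] [NormedSpace ℂ E] [Nontrivial E] {U : Set E}

theorem re_nonpos_of_forall_mem_frontier_re_nonpos {q : E → ℂ} (hU : IsBounded U)
    (hq : DiffContOnCl ℂ q U) (h : ∀ z ∈ frontier U, (q z).re ≤ 0) :
    ∀ z ∈ closure U, (q z).re ≤ 0 := by
  have hbound : ∀ w ∈ frontier U, ‖(cexp ∘ q) w‖ ≤ 1 := fun w hw => by
    simpa [Complex.norm_exp] using h w hw
  intro z hz
  simpa [Complex.norm_exp] using
    norm_le_of_forall_mem_frontier_norm_le hU (differentiable_exp.comp_diffContOnCl hq) hbound hz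

theorem re_eq_zero_of_forall_mem_frontier_re_eq_zero {q : E → ℂ} (hU : IsBounded U)
    (hq : DiffContOnCl ℂ q U) (h : ∀ z ∈ frontier U, (q z).re = 0) :
    ∀ z ∈ closure U, (q z).re = 0 := by
  intro z hz
  have hle := re_nonpos_of_forall_mem_frontier_re_nonpos hU hq (fun w hw => (h w hw).le) z hz
  have hge := re_nonpos_of_forall_mem_frontier_re_nonpos hU hq.neg
    (fun w hw => by simp [h w hw]) z hz
  simp only [Pi.neg_apply, neg_re] at hge
  linarith

/-- Taking real parts of `u - w` and `I * (u + w)` turns `u = conj w` into two Dirichlet problems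
with zero boundary data. -/
theorem eq_conj_of_forall_mem_frontier_eq_conj {u w : E → ℂ} (hU : IsBounded U)
    (hu : DiffContOnCl ℂ u U) (hw : DiffContOnCl ℂ w U)
    (h : ∀ z ∈ frontier U, u z = conj (w z)) :
    ∀ z ∈ closure U, u z = conj (w z) := by
  intro z hz
  have hre := re_eq_zero_of_forall_mem_frontier_re_eq_zero hU (hu.sub hw)
    (fun x hx => by simp [h x hx]) z hz
  have him := re_eq_zero_of_forall_mem_frontier_re_eq_zero hU
    (diffContOnCl_const.mul (hu.add hw) : DiffContOnCl ℂ (fun x => I * (u x + w x)) U)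
    (fun x hx => by simp [h x hx]) z hz
  simp only [Pi.sub_apply, sub_re] at hre
  simp only [mul_re, I_re, I_im, add_re, add_im] at him
  apply Complex.ext <;> simp <;> linarith

theorem DiffContOnCl.conj_conj {v : ℂ → ℂ} {r : ℝ} (hv : DiffContOnCl ℂ v (ball 0 r)) :
    DiffContOnCl ℂ (conj ∘ v ∘ conj) (ball 0 r) := by
  refine ⟨fun z hz => ?_, ?_⟩
  · have hz' : conj z ∈ ball (0 : ℂ) r := by simpa using hz
    have := (hv.differentiableAt isOpen_ball hz').conj_conj
    rw [Complex.conj_conj] at this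
    exact this.differentiableWithinAt
  · have hmaps : Set.MapsTo conj (ball (0 : ℂ) r) (ball 0 r) := fun z hz => by
      simpa using hz
    exact continuous_conj.comp_continuousOn
      (hv.2.comp continuous_conj.continuousOn (hmaps.closure continuous_conj))

theorem eq_comp_conj_of_forall_mem_sphere {u v : ℂ → ℂ} {r : ℝ} (hr : r ≠ 0)
    (hu : DiffContOnCl ℂ u (ball 0 r)) (hv : DiffContOnCl ℂ v (ball 0 r))
    (h : ∀ z ∈ sphere (0 : ℂ) r, u z = v (conj z)) :
    ∀ z ∈ closedBall (0 : ℂ) r, u z = v (conj z) := by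
  intro z hz
  rw [← closure_ball 0 hr] at hz
  simpa using eq_conj_of_forall_mem_frontier_eq_conj isBounded_ball hu hv.conj_conj
    (fun x hx => by rw [frontier_ball 0 hr] at hx; simpa using h x hx) z hz

end Reflection

theorem anticommutes_mul_iff {R : Type*} [CommRing R] {ι : Type*} [Fintype ι] [DecidableEq ι]
    {P a b : Matrix ι ι R} (hP : P * P = 1) (ha : IsUnit a) (hb : IsUnit b) :
    P * (a * b) * P = -(a * b) ↔ a⁻¹ * P * a = -(b * P * b⁻¹) := by
  have hPu : IsUnit P := IsUnit.of_mul_eq_one P hP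
  have ha' := (isUnit_iff_isUnit_det a).mp ha
  have hb' := (isUnit_iff_isUnit_det b).mp hb
  calc P * (a * b) * P = -(a * b) ↔ P * (a * b) * P * P = -(a * b) * P := hPu.mul_left_inj.symm
    _ ↔ a * (a⁻¹ * P * a) * b = a * -(b * P * b⁻¹) * b := by
      simp only [Matrix.mul_assoc, hP, Matrix.mul_one, Matrix.mul_neg, Matrix.neg_mul,
        mul_nonsing_inv_cancel_left _ _ ha', nonsing_inv_mul _ hb']
    _ ↔ a⁻¹ * P * a = -(b * P * b⁻¹) := by rw [hb.mul_left_inj, ha.mul_right_inj]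

theorem closedDisk_eq_closure_ball : closedDisk = closure (ball (0 : ℂ) 1) := by
  ext z
  simp [closedDisk, closure_ball (0 : ℂ) one_ne_zero]

theorem openDisk_eq_ball : openDisk = ball (0 : ℂ) 1 := by
  ext z
  simp [openDisk]

namespace LeftCanonicalFactorizationDatum

variable {n : ℕ} {f gp gm : ℂ → Matrix (Fin n) (Fin n) ℂ}
  (hg : LeftCanonicalFactorizationDatum n f gp gm)
include hg

theorem diffContOnCl_p (i j : Fin n) : DiffContOnCl ℂ (fun z => gp z i j) (ball 0 1) :=
  ⟨openDisk_eq_ball ▸ hg.hol_p i j,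
    closedDisk_eq_closure_ball ▸ (continuous_id.matrix_elem i j).comp_continuousOn hg.cont_p⟩

theorem diffContOnCl_m (i j : Fin n) : DiffContOnCl ℂ (fun z => gm z i j) (ball 0 1) :=
  ⟨openDisk_eq_ball ▸ hg.hol_m i j,
    closedDisk_eq_closure_ball ▸ (continuous_id.matrix_elem i j).comp_continuousOn hg.cont_m⟩

theorem diffContOnCl_inv_mul_mul (P : Matrix (Fin n) (Fin n) ℂ) (i j : Fin n) :
    DiffContOnCl ℂ (fun z => ((gp z)⁻¹ * P * gp z) i j) (ball 0 1) := by
  have hP (k l : Fin n) : DiffContOnCl ℂ (fun _ : ℂ => P k l) (ball 0 1) := diffContOnCl_const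
  have hunit : ∀ z ∈ closure (ball 0 1), IsUnit (gp z) := closedDisk_eq_closure_ball ▸ hg.unit_p
  exact diffContOnCl_matrix_mul
    (diffContOnCl_matrix_mul (diffContOnCl_matrix_inv hg.diffContOnCl_p hunit) hP)
    hg.diffContOnCl_p i j

theorem diffContOnCl_mul_mul_inv (P : Matrix (Fin n) (Fin n) ℂ) (i j : Fin n) :
    DiffContOnCl ℂ (fun z => (gm z * P * (gm z)⁻¹) i j) (ball 0 1) := by
  have hP (k l : Fin n) : DiffContOnCl ℂ (fun _ : ℂ => P k l) (ball 0 1) := diffContOnCl_const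
  have hunit : ∀ z ∈ closure (ball 0 1), IsUnit (gm z) := closedDisk_eq_closure_ball ▸ hg.unit_m
  exact diffContOnCl_matrix_mul (diffContOnCl_matrix_mul hg.diffContOnCl_m hP)
    (diffContOnCl_matrix_inv hg.diffContOnCl_m hunit) i j

end LeftCanonicalFactorizationDatum

theorem exterior_extension_anticommutes_with_chiral_symmetry_general
    {n : ℕ} (P : Matrix (Fin n) (Fin n) ℂ)
    (hP2 : P * P = 1)
    (f gp gm : ℂ → Matrix (Fin n) (Fin n) ℂ)
    (hchiral : ∀ z : ℂ, ‖z‖ = 1 → P * f z * P = -(f z))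
    (hg : LeftCanonicalFactorizationDatum n f gp gm) :
    ∀ w ∈ closedDisk,
      P * (gp (starRingEnd ℂ w) * gm w) * P = -(gp (starRingEnd ℂ w) * gm w) := by
  have conj_mem {z : ℂ} (hz : z ∈ closedDisk) : conj z ∈ closedDisk := by
    simpa [closedDisk] using hz
  have hsphere : ∀ z ∈ sphere (0 : ℂ) 1,
      (gp z)⁻¹ * P * gp z = -(gm (conj z) * P * (gm (conj z))⁻¹) := by
    intro z hz
    have hz1 : ‖z‖ = 1 := by simpa using hz
    rw [← anticommutes_mul_iff hP2 (hg.unit_p z hz1.le) (hg.unit_m _ (conj_mem hz1.le)),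
      ← hg.factor z hz1]
    exact hchiral z hz1
  intro w hw
  rw [anticommutes_mul_iff hP2 (hg.unit_p _ (conj_mem hw)) (hg.unit_m w hw)]
  ext i j
  simpa using eq_comp_conj_of_forall_mem_sphere one_ne_zero
    (hg.diffContOnCl_inv_mul_mul P i j) (hg.diffContOnCl_mul_mul_inv P i j).neg
    (fun z hz => congrFun₂ (hsphere z hz) i j) (conj w) (by simpa [closedDisk] using hw)

/-- If the symbol `f` anticommutes with a Hermitian unitary `P` on the unit circle, then its
exterior extension `F(w) = g₊(w̄) g₋(w)` anticommutes with `P` at every point of the closed unit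
disk. -/
theorem exterior_extension_anticommutes_with_chiral_symmetry
    {n : ℕ} (hn : 1 ≤ n) (P : Matrix (Fin n) (Fin n) ℂ)
    (hP : P.IsHermitian) (hP2 : P * P = 1)
    (f gp gm : ℂ → Matrix (Fin n) (Fin n) ℂ)
    (hchiral : ∀ z : ℂ, ‖z‖ = 1 → P * f z * P = -(f z))
    (hg : LeftCanonicalFactorizationDatum n f gp gm) :
    ∀ w ∈ closedDisk,
      P * (gp (starRingEnd ℂ w) * gm w) * P = -(gp (starRingEnd ℂ w) * gm w) :=
  exterior_extension_anticommutes_with_chiral_symmetry_general P hP2 f gp gm hchiral hg
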